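/- Let n ≥ 1, T > 0, and let A, B : [0,T] → ℂ^{n×n} be continuous. Suppose U : [0,T] → ℂ^{n×n} is differentiable on [0,T], takes invertible values, satisfies U(0) = U(T) = Id, and U'(t) = U(t)B(t) − A(t)U(t) for all t ∈ [0,T] (i.e. B = U^{-1}U' + U^{-1}AU). Let U_A, U_B : [0,T] → ℂ^{n×n} be differentiable on [0,T] with U_A'(t) + A(t)U_A(t) = 0, U_B'(t) + B(t)U_B(t) = 0 for all t ∈ [0,T] and U_A(T) = U_B(T) = Id. Then U_A(t) = U(t)·U_B(t) for all t ∈ [0,T]; in particular U_A(0) = U_B(0), i.e. the scattering data of A and of B along this geodesic coincide. -/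

import Mathlib

/-!
The product `V = U · U_B` solves the same linear equation as `U_A`:
`V' = (U B - A U) U_B - U B U_B = -A V`, and `V(T) = U(T) U_B(T) = Id = U_A(T)`.
Linear ODEs with continuous coefficients have unique solutions (Gronwall), so `U_A = V` on
`[0, T]`; at `t = 0` this reads `U_A(0) = U(0) U_B(0) = U_B(0)`.
-/

open Matrix Set

attribute [local instance] Matrix.normedAddCommGroup Matrix.normedSpace

namespace Matrix

variable {ι α : Type*} [Fintype ι] [NormedRing α]

theorem norm_mul_le_card_mul (x y : Matrix ι ι α) :
    ‖x * y‖ ≤ Fintype.card ι * ‖x‖ * ‖y‖ := by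
  refine (norm_le_iff (by positivity)).2 fun i j => ?_
  calc ‖(x * y) i j‖ ≤ ∑ k, ‖x i k * y k j‖ := by rw [mul_apply]; exact norm_sum_le _ _
    _ ≤ ∑ _k : ι, ‖x‖ * ‖y‖ := Finset.sum_le_sum fun k _ =>
        (norm_mul_le _ _).trans <| mul_le_mul (norm_entry_le_entrywise_sup_norm x)
          (norm_entry_le_entrywise_sup_norm y) (norm_nonneg _) (norm_nonneg _)
    _ = Fintype.card ι * ‖x‖ * ‖y‖ := by simp [mul_assoc]

theorem lipschitzWith_mul_left (a : Matrix ι ι α) :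
    LipschitzWith (Fintype.card ι * ‖a‖₊) (a * ·) :=
  LipschitzWith.of_dist_le_mul fun x y => by
    simpa [dist_eq_norm, ← mul_sub] using norm_mul_le_card_mul a (x - y)

noncomputable def mulCLM (ι : Type*) [Fintype ι] :
    Matrix ι ι ℂ →L[ℝ] Matrix ι ι ℂ →L[ℝ] Matrix ι ι ℂ :=
  LinearMap.toContinuousLinearMap
    ((LinearMap.toContinuousLinearMap : _ ≃ₗ[ℝ] (Matrix ι ι ℂ →L[ℝ] Matrix ι ι ℂ)).toLinearMap ∘ₗ
      LinearMap.mul ℝ (Matrix ι ι ℂ))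

@[simp] theorem mulCLM_apply (x y : Matrix ι ι ℂ) : mulCLM ι x y = x * y := rfl

end Matrix

variable {ι : Type*} [Fintype ι]

theorem HasDerivWithinAt.matrix_mul {f g : ℝ → Matrix ι ι ℂ} {f' g' : Matrix ι ι ℂ}
    {s : Set ℝ} {t : ℝ} (hf : HasDerivWithinAt f f' s t) (hg : HasDerivWithinAt g g' s t) :
    HasDerivWithinAt (fun t => f t * g t) (f' * g t + f t * g') s t := by
  have h := (mulCLM ι).hasDerivWithinAt_of_bilinear hf hg
  rwa [add_comm] at h

theorem eqOn_Icc_of_hasDerivWithinAt_mul_left {A X Y : ℝ → Matrix ι ι ℂ} {a b : ℝ}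
    (hA : ContinuousOn A (Icc a b))
    (hX : ∀ t ∈ Icc a b, HasDerivWithinAt X (A t * X t) (Icc a b) t)
    (hY : ∀ t ∈ Icc a b, HasDerivWithinAt Y (A t * Y t) (Icc a b) t)
    (hb : X b = Y b) : EqOn X Y (Icc a b) := by
  obtain ⟨C, hC⟩ := isCompact_Icc.exists_bound_of_continuousOn hA
  have hlip : ∀ t ∈ Ioc a b, LipschitzOnWith (Fintype.card ι * C.toNNReal) (A t * ·) univ := by
    intro t ht
    have hAt := hC t (Ioc_subset_Icc_self ht)
    refine ((lipschitzWith_mul_left (A t)).weaken ?_).lipschitzOnWith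
    gcongr
    exact (Real.le_toNNReal_iff_coe_le ((norm_nonneg _).trans hAt)).2 hAt
  have hleft : ∀ Z : ℝ → Matrix ι ι ℂ,
      (∀ t ∈ Icc a b, HasDerivWithinAt Z (A t * Z t) (Icc a b) t) →
      ∀ t ∈ Ioc a b, HasDerivWithinAt Z (A t * Z t) (Iic t) t := fun Z hZ t ht =>
    (hZ t (Ioc_subset_Icc_self ht)).mono_of_mem_nhdsWithin (Icc_mem_nhdsLE_of_mem ht)
  exact ODE_solution_unique_of_mem_Icc_left hlip
    (fun t ht => (hX t ht).continuousWithinAt) (hleft X hX) (fun _ _ => trivial)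
    (fun t ht => (hY t ht).continuousWithinAt) (hleft Y hY) (fun _ _ => trivial) hb

theorem HasDerivWithinAt.gauge_mul {U X : ℝ → Matrix ι ι ℂ} {A B : Matrix ι ι ℂ} {s : Set ℝ}
    {t : ℝ} (hU : HasDerivWithinAt U (U t * B - A * U t) s t)
    (hX : HasDerivWithinAt X (-(B * X t)) s t) :
    HasDerivWithinAt (fun t => U t * X t) (-A * (U t * X t)) s t := by
  convert hU.matrix_mul hX using 1
  noncomm_ring

theorem stmt_13_general (n : ℕ) (T : ℝ) (hT : 0 < T)
    (A B : ℝ → Matrix (Fin n) (Fin n) ℂ)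
    (hA_cont : ContinuousOn A (Set.Icc (0 : ℝ) T))
    (U : ℝ → Matrix (Fin n) (Fin n) ℂ)
    (hU0 : U 0 = 1) (hUT : U T = 1)
    (hU : ∀ t ∈ Set.Icc (0 : ℝ) T,
      HasDerivWithinAt U (U t * B t - A t * U t) (Set.Icc (0 : ℝ) T) t)
    (UA UB : ℝ → Matrix (Fin n) (Fin n) ℂ)
    (hUA : ∀ t ∈ Set.Icc (0 : ℝ) T,
      HasDerivWithinAt UA (-(A t * UA t)) (Set.Icc (0 : ℝ) T) t)
    (hUB : ∀ t ∈ Set.Icc (0 : ℝ) T,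
      HasDerivWithinAt UB (-(B t * UB t)) (Set.Icc (0 : ℝ) T) t)
    (hUAT : UA T = 1) (hUBT : UB T = 1) :
    (∀ t ∈ Set.Icc (0 : ℝ) T, UA t = U t * UB t) ∧ UA 0 = UB 0 := by
  have hUA' : ∀ t ∈ Icc 0 T, HasDerivWithinAt UA (-A t * UA t) (Icc 0 T) t := fun t ht => by
    simpa only [neg_mul] using hUA t ht
  have hUUB : ∀ t ∈ Icc 0 T,
      HasDerivWithinAt (fun t => U t * UB t) (-A t * (U t * UB t)) (Icc 0 T) t :=
    fun t ht => (hU t ht).gauge_mul (hUB t ht)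
  have hEq : EqOn UA (fun t => U t * UB t) (Icc 0 T) :=
    eqOn_Icc_of_hasDerivWithinAt_mul_left hA_cont.neg hUA' hUUB (by simp [hUAT, hUT, hUBT])
  refine ⟨fun t ht => hEq ht, ?_⟩
  simpa [hU0] using hEq (left_mem_Icc.2 hT.le)

/-- The 'if' direction of Proposition 3.6 of the paper along one geodesic:
if `U` is an invertible-valued gauge with `U(0) = U(T) = Id` carrying `A` to
`B`, i.e. `U' = UB - AU`, then the fundamental solutions satisfy
`U_A = U · U_B`; in particular the scattering data agree: `U_A(0) = U_B(0)`. -/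
theorem stmt_13 (n : ℕ) (hn : 1 ≤ n) (T : ℝ) (hT : 0 < T)
    (A B : ℝ → Matrix (Fin n) (Fin n) ℂ)
    (hA_cont : ContinuousOn A (Set.Icc (0 : ℝ) T))
    (hB_cont : ContinuousOn B (Set.Icc (0 : ℝ) T))
    (U : ℝ → Matrix (Fin n) (Fin n) ℂ)
    (hU_inv : ∀ t ∈ Set.Icc (0 : ℝ) T, IsUnit (U t))
    (hU0 : U 0 = 1) (hUT : U T = 1)
    (hU : ∀ t ∈ Set.Icc (0 : ℝ) T,
      HasDerivWithinAt U (U t * B t - A t * U t) (Set.Icc (0 : ℝ) T) t)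
    (UA UB : ℝ → Matrix (Fin n) (Fin n) ℂ)
    (hUA : ∀ t ∈ Set.Icc (0 : ℝ) T,
      HasDerivWithinAt UA (-(A t * UA t)) (Set.Icc (0 : ℝ) T) t)
    (hUB : ∀ t ∈ Set.Icc (0 : ℝ) T,
      HasDerivWithinAt UB (-(B t * UB t)) (Set.Icc (0 : ℝ) T) t)
    (hUAT : UA T = 1) (hUBT : UB T = 1) :
    (∀ t ∈ Set.Icc (0 : ℝ) T, UA t = U t * UB t) ∧ UA 0 = UB 0 :=
  stmt_13_general n T hT A B hA_cont U hU0 hUT hU UA UB hUA hUB hUAT hUBT
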